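/- If A₁, ..., Aₚ are finite abelian groups and for each i ∈ {1, ..., p−1} there is a finite abelian group Gᵢ with Aᵢ ⊕ A_{i+1} ≅ Gᵢ ⊕ Gᵢ, then there is a finite abelian group G with A₁ ⊕ Aₚ ≅ G ⊕ G. -/
import Mathlib

open Finset

/-- number of `k`-torsion elements -/
noncomputable def tc (k : ℕ) (X : Type*) [AddCommGroup X] : ℕ :=
  Nat.card {x : X // k • x = 0}

lemma tc_congr {X Y : Type*} [AddCommGroup X] [AddCommGroup Y] (k : ℕ) (e : X ≃+ Y) :
    tc k X = tc k Y := by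
  refine Nat.card_congr (e.toEquiv.subtypeEquiv fun x => ?_)
  simp only [AddEquiv.toEquiv_eq_coe, EquivLike.coe_coe]
  rw [← map_nsmul e, map_eq_zero_iff _ e.injective]

lemma tc_prod (k : ℕ) (X Y : Type*) [AddCommGroup X] [AddCommGroup Y] :
    tc k (X × Y) = tc k X * tc k Y := by
  have : tc k X * tc k Y = Nat.card ({x : X // k • x = 0} × {y : Y // k • y = 0}) :=
    (Nat.card_prod _ _).symm
  rw [tc, this]
  refine Nat.card_congr ((Equiv.subtypeEquivRight fun x => ?_).trans
    (Equiv.subtypeProdEquivProd (p := fun a => k • a = 0) (q := fun b => k • b = 0)))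
  simp [Prod.ext_iff]

lemma tc_pi (k : ℕ) {ι : Type*} [Fintype ι] (Z : ι → Type*) [∀ i, AddCommGroup (Z i)] :
    tc k (∀ i, Z i) = ∏ i, tc k (Z i) := by
  have : ∏ i, tc k (Z i) = Nat.card (∀ i, {z : Z i // k • z = 0}) := (Nat.card_pi).symm
  rw [tc, this]
  refine Nat.card_congr ((Equiv.subtypeEquivRight fun x => ?_).trans
    (Equiv.subtypePiEquivPi (p := fun i (z : Z i) => k • z = 0)))
  simp [funext_iff]

lemma tc_zmod (k m : ℕ) (hm : m ≠ 0) : tc k (ZMod m) = Nat.gcd m k := by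
  classical
  have : NeZero m := ⟨hm⟩
  set φ : ZMod m →+ ZMod m :=
    { toFun := fun x => k • x
      map_zero' := smul_zero k
      map_add' := fun a b => smul_add k a b } with hφ
  have htc : tc k (ZMod m) = Nat.card φ.ker := by
    refine Nat.card_congr (Equiv.subtypeEquivRight fun x => ?_).symm
    simp [hφ, AddMonoidHom.mem_ker]
  have hrange : φ.range = AddSubgroup.zmultiples ((k : ZMod m)) := by
    ext y
    constructor
    · rintro ⟨x, rfl⟩
      refine ⟨(x.val : ℤ), ?_⟩
      simp only [hφ, AddMonoidHom.coe_mk, ZeroHom.coe_mk]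
      rw [zsmul_eq_mul, nsmul_eq_mul]
      push_cast
      rw [ZMod.natCast_val, ZMod.cast_id, mul_comm]
    · rintro ⟨z, rfl⟩
      refine ⟨(z : ZMod m), ?_⟩
      simp only [hφ, AddMonoidHom.coe_mk, ZeroHom.coe_mk]
      rw [nsmul_eq_mul, zsmul_eq_mul]
      exact mul_comm _ _
  have hcard : Nat.card (ZMod m) = Nat.card (ZMod m ⧸ φ.ker) * Nat.card φ.ker :=
    AddSubgroup.card_eq_card_quotient_mul_card_addSubgroup φ.ker
  have hq : Nat.card (ZMod m ⧸ φ.ker) = m / Nat.gcd m k := by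
    rw [Nat.card_congr (QuotientAddGroup.quotientKerEquivRange φ).toEquiv, hrange,
      Nat.card_zmultiples, ZMod.addOrderOf_coe k hm]
  have hmc : Nat.card (ZMod m) = m := Nat.card_zmod m
  have hdvd : Nat.gcd m k ∣ m := Nat.gcd_dvd_left m k
  have h1 : 0 < Nat.gcd m k := Nat.gcd_pos_of_pos_left k (Nat.pos_of_ne_zero hm)
  have h2 : m / Nat.gcd m k * Nat.gcd m k = m := Nat.div_mul_cancel hdvd
  have h3 : 0 < m / Nat.gcd m k := Nat.div_pos (Nat.le_of_dvd (Nat.pos_of_ne_zero hm) hdvd) h1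
  rw [htc]
  have := hcard
  rw [hmc, hq] at this
  -- m = (m / gcd) * card ker, and m = (m/gcd) * gcd
  nlinarith [this, h2, h3]

lemma tc_pos (k : ℕ) (X : Type*) [AddCommGroup X] [Finite X] : 0 < tc k X := by
  haveI : Nonempty {x : X // k • x = 0} := ⟨⟨0, smul_zero k⟩⟩
  exact Nat.card_pos

lemma my_gcd_pow_pow (p a b : ℕ) : Nat.gcd (p ^ a) (p ^ b) = p ^ min a b := by
  rcases le_total a b with hab | hab
  · rw [Nat.gcd_eq_left (pow_dvd_pow p hab), min_eq_left hab]
  · rw [Nat.gcd_eq_right (pow_dvd_pow p hab), min_eq_right hab]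

lemma even_fact_of_isSquare {m : ℕ} (hm : m ≠ 0) (h : IsSquare m) (P : ℕ) :
    Even (m.factorization P) := by
  obtain ⟨r, rfl⟩ := h
  have hr : r ≠ 0 := by rintro rfl; simp at hm
  rw [Nat.factorization_mul hr hr]
  exact ⟨r.factorization P, rfl⟩

lemma isSquare_of_even_fact {m : ℕ} (hm : m ≠ 0)
    (h : ∀ P, Even (m.factorization P)) : IsSquare m := by
  refine ⟨m.factorization.prod fun p k => p ^ (k / 2), ?_⟩
  rw [← Finsupp.prod_mul]
  conv_lhs => rw [← Nat.factorization_prod_pow_eq_self hm]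
  rw [Nat.prod_factorization_eq_prod_primeFactors,
    Nat.prod_factorization_eq_prod_primeFactors]
  refine Finset.prod_congr rfl fun p hp => ?_
  rw [← pow_add]
  congr 1
  obtain ⟨c, hc⟩ := h p
  omega

lemma even_pow_exp_of_isSquare {P E : ℕ} (hP : P.Prime) (h : IsSquare (P ^ E)) : Even E := by
  have := even_fact_of_isSquare (pow_ne_zero E hP.ne_zero) h P
  rwa [hP.factorization_pow, Finsupp.single_eq_same] at this

lemma even_fibers {ι : Type} [Fintype ι] (p e : ι → ℕ) (hp : ∀ i, (p i).Prime)
    (he : ∀ i, e i ≠ 0)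
    (hsq : ∀ k : ℕ, IsSquare (∏ i, Nat.gcd (p i ^ e i) k)) (a : ℕ) :
    Even ((univ.filter (fun i => p i ^ e i = a)).card) := by
  classical
  rcases (univ.filter (fun i => p i ^ e i = a)).eq_empty_or_nonempty with hemp | ⟨i₀, hi₀⟩
  · rw [hemp]; exact Even.zero
  rw [mem_filter] at hi₀
  set P := p i₀ with hP
  set E := e i₀ with hE
  have hPp : P.Prime := hp i₀
  have haPE : a = P ^ E := hi₀.2.symm
  -- exponent sums
  set Ex : ℕ → ℕ := fun t => ∑ i ∈ univ.filter (fun i => p i = P), min (e i) t with hEx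
  have key : ∀ t, ∏ i, Nat.gcd (p i ^ e i) (P ^ t) = P ^ Ex t := by
    intro t
    rw [← Finset.prod_filter_mul_prod_filter_not univ (fun i => p i = P)]
    have h2 : ∏ i ∈ univ.filter (fun i => ¬ p i = P), Nat.gcd (p i ^ e i) (P ^ t) = 1 := by
      refine Finset.prod_eq_one fun i hi => ?_
      rw [mem_filter] at hi
      exact Nat.Coprime.pow _ _ ((Nat.coprime_primes (hp i) hPp).2 hi.2)
    have h1 : ∏ i ∈ univ.filter (fun i => p i = P), Nat.gcd (p i ^ e i) (P ^ t)
        = ∏ i ∈ univ.filter (fun i => p i = P), P ^ min (e i) t := by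
      refine Finset.prod_congr rfl fun i hi => ?_
      rw [mem_filter] at hi
      rw [hi.2, my_gcd_pow_pow]
    rw [h1, h2, mul_one, ← Finset.prod_pow_eq_pow_sum]
  have hEven : ∀ t, Even (Ex t) := fun t =>
    even_pow_exp_of_isSquare hPp (by rw [← key t]; exact hsq (P ^ t))
  set N : ℕ → ℕ := fun t => (univ.filter (fun i => p i = P ∧ t < e i)).card with hN
  have hstep : ∀ t, Ex (t + 1) = Ex t + N t := by
    intro t
    rw [hEx, hN]
    simp only
    rw [Finset.card_filter]
    have : ∑ i ∈ univ, (if p i = P ∧ t < e i then 1 else 0)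
        = ∑ i ∈ univ.filter (fun i => p i = P), (if t < e i then 1 else 0) := by
      rw [Finset.sum_filter]
      refine Finset.sum_congr rfl fun i _ => ?_
      by_cases h1 : p i = P <;> by_cases h2 : t < e i <;> simp [h1, h2]
    rw [this, ← Finset.sum_add_distrib]
    refine Finset.sum_congr rfl fun i _ => ?_
    by_cases h2 : t < e i
    · simp [h2]; omega
    · simp [h2]; omega
  have hNeven : ∀ t, Even (N t) := by
    intro t
    have h1 := hEven t
    have h2 := hEven (t + 1)
    rw [hstep t] at h2
    rw [Nat.even_iff] at h1 h2 ⊢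
    omega
  -- the target fiber
  have hfiber : (univ.filter (fun i => p i ^ e i = a))
      = univ.filter (fun i => p i = P ∧ e i = E) := by
    refine Finset.filter_congr fun i _ => ?_
    rw [haPE]
    constructor
    · intro hq
      have hdvd : p i ∣ P ^ E := hq ▸ dvd_pow_self (p i) (he i)
      have hpP : p i = P := ((Nat.prime_dvd_prime_iff_eq (hp i) hPp).1
        ((hp i).dvd_of_dvd_pow hdvd))
      refine ⟨hpP, ?_⟩
      rw [hpP] at hq
      exact Nat.pow_right_injective hPp.two_le hq
    · rintro ⟨h1, h2⟩; rw [h1, h2]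
  have hcount : N (E - 1) = (univ.filter (fun i => p i = P ∧ e i = E)).card + N E := by
    rw [hN]
    simp only
    rw [Finset.card_filter, Finset.card_filter, Finset.card_filter, ← Finset.sum_add_distrib]
    refine Finset.sum_congr rfl fun i _ => ?_
    have hE1 : 1 ≤ E := Nat.one_le_iff_ne_zero.2 (he i₀)
    by_cases h1 : p i = P <;> by_cases h2 : e i = E <;> by_cases h3 : E < e i <;>
      by_cases h4 : E - 1 < e i <;> simp [h1, h2, h3, h4] <;> omega
  rw [hfiber]
  have h1 := hNeven (E - 1)
  have h2 := hNeven E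
  rw [Nat.even_iff] at h1 h2 ⊢
  omega

lemma pairing {ι : Type} [Fintype ι] (q : ι → ℕ)
    (h : ∀ a, Even ((univ.filter (fun i => q i = a)).card)) :
    ∃ (κ : Type) (w : κ → ℕ) (σ : ι ≃ κ ⊕ κ),
      (∀ i, Sum.elim w w (σ i) = q i) ∧ (∀ j : κ, ∃ i, q i = w j) := by
  classical
  set m : ℕ → ℕ := fun a => (univ.filter (fun i => q i = a)).card / 2 with hm
  have hcard : ∀ a, Fintype.card {i // q i = a} = m a + m a := by
    intro a
    rw [Fintype.card_subtype]
    obtain ⟨r, hr⟩ := h a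
    rw [hm]; simp only; omega
  have hF : ∀ a, Nonempty ({i // q i = a} ≃ (Fin (m a) ⊕ Fin (m a))) := by
    intro a
    refine ⟨Fintype.equivOfCardEq ?_⟩
    rw [hcard a, Fintype.card_sum, Fintype.card_fin]
  set F : ∀ a, {i // q i = a} ≃ (Fin (m a) ⊕ Fin (m a)) := fun a => (hF a).some with hFdef
  refine ⟨Σ a : ℕ, Fin (m a), fun x => x.1,
    (Equiv.sigmaFiberEquiv q).symm.trans ((Equiv.sigmaCongrRight F).trans
      (Equiv.sigmaSumDistrib _ _)), fun i => ?_, fun j => ?_⟩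
  · simp only [Equiv.trans_apply]
    have h1 : (Equiv.sigmaFiberEquiv q).symm i = ⟨q i, ⟨i, rfl⟩⟩ := rfl
    rw [h1]
    have h2 : (Equiv.sigmaCongrRight F) ⟨q i, ⟨i, rfl⟩⟩ = ⟨q i, F (q i) ⟨i, rfl⟩⟩ := rfl
    rw [h2]
    rcases hx : F (q i) ⟨i, rfl⟩ with x | x <;>
      simp [hx, Equiv.sigmaSumDistrib]
  · obtain ⟨a, x⟩ := j
    have : 0 < m a := x.pos
    have hne : (univ.filter (fun i => q i = a)).Nonempty := by
      rw [← Finset.card_pos]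
      have hma : m a = #(filter (fun i => q i = a) univ) / 2 := rfl
      omega
    obtain ⟨i, hi⟩ := hne
    rw [mem_filter] at hi
    exact ⟨i, hi.2⟩
lemma exists_sq (X : Type) [AddCommGroup X] [Finite X]
    (h : ∀ k, IsSquare (tc k X)) :
    ∃ (G : Type) (_ : AddCommGroup G) (_ : Finite G), Nonempty (X ≃+ (G × G)) := by
  classical
  obtain ⟨ι, hι, p, hp, e, ⟨ee⟩⟩ := AddCommGroup.equiv_directSum_zmod_of_finite X
  have e1 : X ≃+ ∀ i, ZMod (p i ^ e i) := ee.trans (DirectSum.addEquivProd _)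
  have esplit : (∀ i, ZMod (p i ^ e i)) ≃+
      ((∀ i : {i : ι // e i ≠ 0}, ZMod (p i.1 ^ e i.1)) ×
       (∀ i : {i : ι // ¬ e i ≠ 0}, ZMod (p i.1 ^ e i.1))) :=
    { Equiv.piEquivPiSubtypeProd (fun i => e i ≠ 0) (fun i => ZMod (p i ^ e i)) with
      map_add' := fun _ _ => rfl }
  haveI : ∀ i : {i : ι // ¬ e i ≠ 0}, Unique (ZMod (p i.1 ^ e i.1)) := by
    intro i
    have h1 : p i.1 ^ e i.1 = 1 := by
      have h2 := i.2; rw [not_not] at h2; rw [h2, pow_zero]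
    rw [h1]
    infer_instance
  have e2 : X ≃+ ∀ i : {i : ι // e i ≠ 0}, ZMod (p i.1 ^ e i.1) :=
    (e1.trans esplit).trans AddEquiv.prodUnique
  set q : {i : ι // e i ≠ 0} → ℕ := fun i => p i.1 ^ e i.1 with hqdef
  have hq0 : ∀ i, q i ≠ 0 := fun i => pow_ne_zero _ (hp i.1).ne_zero
  have htc : ∀ k, tc k X = ∏ i, Nat.gcd (q i) k := by
    intro k
    rw [tc_congr k e2, tc_pi]
    exact Finset.prod_congr rfl fun i _ => tc_zmod k (q i) (hq0 i)
  have hsq : ∀ k, IsSquare (∏ i, Nat.gcd (q i) k) := fun k => htc k ▸ h k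
  have hev := even_fibers (fun i : {i : ι // e i ≠ 0} => p i.1) (fun i => e i.1)
      (fun i => hp i.1) (fun i => i.2) hsq
  obtain ⟨κ, w, σ, hσ, hw⟩ := pairing q hev
  haveI : Finite (κ ⊕ κ) := Finite.of_equiv _ σ
  haveI : Finite κ := Finite.of_injective (Sum.inl : κ → κ ⊕ κ) Sum.inl_injective
  haveI : ∀ j : κ, NeZero (w j) := fun j => ⟨by
    obtain ⟨i, hi⟩ := hw j; rw [← hi]; exact hq0 i⟩
  refine ⟨∀ j : κ, ZMod (w j), inferInstance, inferInstance, ⟨?_⟩⟩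
  have e3 : (∀ i, ZMod (q i)) ≃+ ∀ i, ZMod (Sum.elim w w (σ i)) :=
    AddEquiv.piCongrRight fun i => (ZMod.ringEquivCongr (hσ i).symm).toAddEquiv
  have e4 : (∀ j : κ ⊕ κ, ZMod (Sum.elim w w j)) ≃+ ∀ i, ZMod (Sum.elim w w (σ i)) :=
    { Equiv.piCongrLeft' (fun j => ZMod (Sum.elim w w j)) σ.symm with
      map_add' := fun _ _ => rfl }
  have e5 : (∀ j : κ ⊕ κ, ZMod (Sum.elim w w j)) ≃+
      ((∀ j : κ, ZMod (w j)) × (∀ j : κ, ZMod (w j))) :=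
    { Equiv.sumPiEquivProdPi (fun j => ZMod (Sum.elim w w j)) with
      map_add' := fun _ _ => rfl }
  exact ((e2.trans e3).trans e4.symm).trans e5

/-- Iterated form of Fact 6.1: if `A₁, ..., A_{n+1}` are finite abelian groups and each
consecutive sum `Aᵢ ⊕ A_{i+1}` is of the form `Gᵢ ⊕ Gᵢ`, then `A₁ ⊕ A_{n+1}` is of the
form `G ⊕ G` for some finite abelian group `G`. -/
theorem stmt_11 (n : ℕ) (A : Fin (n + 1) → Type) [∀ i, AddCommGroup (A i)]
    [∀ i, Finite (A i)]
    (h : ∀ i : Fin n, ∃ (G : Type) (_ : AddCommGroup G) (_ : Finite G),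
      Nonempty ((A i.castSucc × A i.succ) ≃+ (G × G))) :
    ∃ (G : Type) (_ : AddCommGroup G) (_ : Finite G),
      Nonempty ((A 0 × A (Fin.last n)) ≃+ (G × G)) := by
  classical
  have hcons : ∀ (k : ℕ) (i : Fin n), IsSquare (tc k (A i.castSucc) * tc k (A i.succ)) := by
    intro k i
    obtain ⟨G, _, _, ⟨eqv⟩⟩ := h i
    rw [← tc_prod k (A i.castSucc) (A i.succ), tc_congr k eqv, tc_prod]
    exact ⟨tc k G, rfl⟩
  have hpos : ∀ (k : ℕ) (i : Fin (n + 1)), tc k (A i) ≠ 0 := fun k i => (tc_pos k (A i)).ne'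
  have key : ∀ k, IsSquare (tc k (A 0 × A (Fin.last n))) := by
    intro k
    rw [tc_prod]
    refine isSquare_of_even_fact (Nat.mul_ne_zero (hpos k 0) (hpos k (Fin.last n))) fun P => ?_
    rw [Nat.factorization_mul (hpos k 0) (hpos k (Fin.last n)), Finsupp.add_apply]
    have hpar : ∀ (i : Fin (n + 1)), (tc k (A i)).factorization P % 2
        = (tc k (A 0)).factorization P % 2 := by
      intro i
      obtain ⟨m, hm⟩ := i
      induction m with
      | zero => rfl
      | succ m ih =>
        have hmn : m < n := by omega
        have hm' : m < n + 1 := by omega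
        have hc := hcons k ⟨m, hmn⟩
        have hcast : (⟨m, hmn⟩ : Fin n).castSucc = ⟨m, hm'⟩ := rfl
        have hsucc : (⟨m, hmn⟩ : Fin n).succ = ⟨m + 1, hm⟩ := rfl
        rw [hcast, hsucc] at hc
        have hev := even_fact_of_isSquare
          (Nat.mul_ne_zero (hpos k ⟨m, hm'⟩) (hpos k ⟨m + 1, hm⟩)) hc P
        rw [Nat.factorization_mul (hpos k ⟨m, hm'⟩) (hpos k ⟨m + 1, hm⟩),
          Finsupp.add_apply, Nat.even_iff] at hev
        have := ih hm'
        omega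
    have h1 := hpar (Fin.last n)
    rw [Nat.even_iff]
    omega
  exact exists_sq (A 0 × A (Fin.last n)) key
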